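/- arXiv:2209.09477 — 3 statements merged into one kernel-verified Lean document; each statement's English description precedes it below -/
import Mathlib

section
/- In the setting of the previous Fourier-mode semi-implicit Euler scheme, the map (ρⁿ,uⁿ,ε) ↦ (ρ^{n+1},u^{n+1},φ^{n+1}) defined by the scheme is continuous in ε at ε = 0 (with Δt and ξ fixed, ξ ≠ 0), and at ε = 0 the update satisfies ρ^{n+1} = 0 whenever the scheme's elliptic equation is enforced with ε = 0. -/
open Complex

/-- Asymptotic consistency of the semi-implicit Fourier-mode scheme: the update is
continuous in ε at ε = 0, and at ε = 0 the update enforces ρ^{n+1} = 0. -/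
theorem semi_implicit_scheme_asymptotic_consistency (ξ c Δt : ℝ) (hξ : ξ ≠ 0)
    (hΔt : 0 < Δt) (hc : 0 < c) (ρn un : ℂ) (S : ℝ → ℂ × ℂ × ℂ)
    (hS : ∀ ε : ℝ, 0 ≤ ε →
      (S ε).1 = ρn - Δt * I * ξ * (S ε).2.1 ∧
      (S ε).2.1 = un - Δt * I * ξ * c ^ 2 * ρn + Δt * I * ξ * (S ε).2.2 ∧
      -(ε : ℂ) ^ 2 * ξ ^ 2 * (S ε).2.2 = (S ε).1) :
    Filter.Tendsto S (nhdsWithin 0 (Set.Ioi 0)) (nhds (S 0)) ∧ (S 0).1 = 0 := by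
  have hξc : (ξ : ℂ) ≠ 0 := by exact_mod_cast hξ
  have hΔc : (Δt : ℂ) ≠ 0 := by exact_mod_cast hΔt.ne'
  set A : ℂ := ρn * (1 - (Δt:ℂ)^2 * (ξ:ℂ)^2 * (c:ℂ)^2) - (Δt:ℂ) * I * (ξ:ℂ) * un with hA
  have hden : ∀ ε : ℝ, ((ε:ℂ)^2 + (Δt:ℂ)^2) ≠ 0 := by
    intro ε
    have : (0:ℝ) < ε^2 + Δt^2 := by positivity
    have h := this.ne'
    intro hcontra
    apply h
    have : ((ε^2 + Δt^2 : ℝ) : ℂ) = 0 := by push_cast; exact hcontra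
    exact_mod_cast this
  -- explicit solution
  set φf : ℝ → ℂ := fun ε => -A / (((ε:ℂ)^2 + (Δt:ℂ)^2) * (ξ:ℂ)^2) with hφf
  set ρf : ℝ → ℂ := fun ε => (ε:ℂ)^2 * A / ((ε:ℂ)^2 + (Δt:ℂ)^2) with hρf
  set f : ℝ → ℂ × ℂ × ℂ := fun ε =>
    (ρf ε, un - (Δt:ℂ) * I * (ξ:ℂ) * (c:ℂ)^2 * ρn + (Δt:ℂ) * I * (ξ:ℂ) * φf ε, φf ε) with hf
  -- S agrees with f on [0, ∞)
  have hSf : ∀ ε : ℝ, 0 ≤ ε → S ε = f ε := by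
    intro ε hε
    obtain ⟨h1, h2, h3⟩ := hS ε hε
    have hd : ((ε:ℂ)^2 + (Δt:ℂ)^2) * (ξ:ℂ)^2 ≠ 0 := mul_ne_zero (hden ε) (pow_ne_zero _ hξc)
    have hI := Complex.I_sq
    have hρkey : ((ε:ℂ)^2 + (Δt:ℂ)^2) * (S ε).1 = (ε:ℂ)^2 * A := by
      linear_combination ((ε:ℂ)^2) * h1 - ((ε:ℂ)^2 * (Δt:ℂ) * I * (ξ:ℂ)) * h2
        - ((Δt:ℂ)^2) * h3 + ((ε:ℂ)^2 * (Δt:ℂ)^2 * (ξ:ℂ)^2 * ((c:ℂ)^2 * ρn - (S ε).2.2)) * hI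
    have hφkey : ((ε:ℂ)^2 + (Δt:ℂ)^2) * (ξ:ℂ)^2 * (S ε).2.2 = -A := by
      linear_combination (-1 : ℂ) * h1 + ((Δt:ℂ) * I * (ξ:ℂ)) * h2 - h3
        + ((Δt:ℂ)^2 * (ξ:ℂ)^2 * ((S ε).2.2 - (c:ℂ)^2 * ρn)) * hI
    have hφ : (S ε).2.2 = φf ε := by
      rw [hφf]; rw [eq_div_iff hd]; linear_combination hφkey
    have hρ : (S ε).1 = ρf ε := by
      rw [hρf]; rw [eq_div_iff (hden ε)]; linear_combination hρkey
    have hu : (S ε).2.1 = un - (Δt:ℂ) * I * (ξ:ℂ) * (c:ℂ)^2 * ρn + (Δt:ℂ) * I * (ξ:ℂ) * φf ε := by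
      rw [h2, hφ]
    rw [hf]
    exact Prod.ext hρ (Prod.ext hu hφ)
  have hS0 : S 0 = f 0 := hSf 0 le_rfl
  constructor
  · -- continuity
    have hcρ : ContinuousAt ρf 0 := by
      apply ContinuousAt.div
      · fun_prop
      · fun_prop
      · exact hden 0
    have hcφ : ContinuousAt φf 0 := by
      apply ContinuousAt.div
      · fun_prop
      · fun_prop
      · exact mul_ne_zero (hden 0) (pow_ne_zero _ hξc)
    have hcf : ContinuousAt f 0 := by
      apply ContinuousAt.prodMk hcρ
      exact ContinuousAt.prodMk (by fun_prop) hcφ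
    have htf : Filter.Tendsto f (nhdsWithin 0 (Set.Ioi 0)) (nhds (f 0)) :=
      (hcf.tendsto).mono_left nhdsWithin_le_nhds
    rw [hS0]
    apply htf.congr'
    filter_upwards [self_mem_nhdsWithin] with x hx
    exact (hSf x (le_of_lt hx)).symm
  · obtain ⟨h1, h2, h3⟩ := hS 0 le_rfl
    have : -(((0:ℝ)):ℂ)^2 * (ξ:ℂ)^2 * (S 0).2.2 = 0 := by norm_num
    rw [← h3, this]
end

section
/- In the setting of the single-stage elliptic reformulation with ε = 0: if ρ_E = 1 identically and φ solves Δt²a² ∂ₓₓφ = ρ̂ − Δt a ∂ₓq̂ − 1 with ρ̂ = 1 (well-prepared), then the resulting updates q := q̂ + Δt a ∂ₓφ and ρ := ρ̂ − Δt a ∂ₓq satisfy ∂ₓq = 0 and ρ = 1. -/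
/-- Quasineutral-limit stage computation: with ε = 0, ρ_E ≡ 1 and well-prepared data
ρ̂ ≡ 1, the elliptic stage equation forces the updated momentum to be divergence-free
and the updated density to be 1. -/
theorem si_stage_limit_well_prepared (a Δt : ℝ) (ha : 0 < a) (hΔt : 0 < Δt)
    (φ qhat : ℝ → ℝ) (hφ : ContDiff ℝ (⊤ : ℕ∞) φ) (hqhat : ContDiff ℝ (⊤ : ℕ∞) qhat)
    (hell : ∀ x, Δt ^ 2 * a ^ 2 * deriv (deriv φ) x
        = 1 - Δt * a * deriv qhat x - 1) :
    ∀ x, deriv (fun y => qhat y + Δt * a * deriv φ y) x = 0 ∧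
      1 - Δt * a * deriv (fun y => qhat y + Δt * a * deriv φ y) x = 1 := by
  intro x
  have hq' : DifferentiableAt ℝ qhat x := (hqhat.differentiable (by simp)).differentiableAt
  have hφ' : DifferentiableAt ℝ (deriv φ) x :=
    ((contDiff_infty_iff_deriv.mp (hφ.of_le (by simp))).2.differentiable (by simp)).differentiableAt
  have hd : deriv (fun y => qhat y + Δt * a * deriv φ y) x
      = deriv qhat x + Δt * a * deriv (deriv φ) x := by
    rw [deriv_fun_add hq' (hφ'.const_mul _), deriv_const_mul _ hφ']
  have key : deriv qhat x + Δt * a * deriv (deriv φ) x = 0 := by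
    have h := hell x
    have hc : Δt * a ≠ 0 := by positivity
    have : Δt * a * (deriv qhat x + Δt * a * deriv (deriv φ) x) = 0 := by
      nlinarith [h]
    exact (mul_eq_zero.mp this).resolve_left hc
  constructor
  · rw [hd, key]
  · rw [hd, key]; ring
end

section
/- Let c > 0, ξ ∈ ℝ, ξ ≠ 0, ε > 0, Δt > 0. The classical (explicit-source) first-order scheme for the Fourier-mode linearised EP system, ρ^{n+1} = ρⁿ − Δt iξ uⁿ, u^{n+1} = uⁿ − Δt iξ c²ρⁿ + Δt iξ φⁿ, −ε²ξ²φⁿ = ρⁿ, has amplification matrix M = [[1, −iΔtξ],[−iΔtξ(c² + 1/(ε²ξ²)), 1]] acting on (ρⁿ, uⁿ), and the eigenvalues of M are 1 ± iΔtξ√(c² + 1/(ε²ξ²)), each of modulus √(1 + Δt²ξ²c² + Δt²/ε²) > 1. Hence the classical scheme is unconditionally unstable for every Δt > 0, with amplification factor at least √(1 + Δt²/ε²). -/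
open Complex Matrix

/-!
Substituting `φⁿ = -ρⁿ / (ε²ξ²)` into the explicit update turns it into the linear map `M`,
whose diagonal is `1` and whose off-diagonal product is `-Δt²ξ²(c² + 1/(ε²ξ²)) = -r²`; hence
its eigenvalues are `1 ± r i`, of modulus `√(1 + r²)`. The electric term alone contributes
`Δt²/ε²` to `r²`, which is positive whatever `Δt` is.
-/

theorem Matrix.det_sub_add_smul_one_eq_zero {R : Type*} [CommRing R] {d p q μ : R}
    (h : μ ^ 2 = p * q) : (!![d, p; q, d] - (d + μ) • (1 : Matrix (Fin 2) (Fin 2) R)).det = 0 := by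
  have hshift : !![d, p; q, d] - (d + μ) • (1 : Matrix (Fin 2) (Fin 2) R) = !![-μ, p; q, -μ] := by
    ext i j
    fin_cases i <;> fin_cases j <;> simp
  rw [hshift, det_fin_two_of]
  linear_combination h

theorem Matrix.det_sub_sub_smul_one_eq_zero {R : Type*} [CommRing R] {d p q μ : R}
    (h : μ ^ 2 = p * q) : (!![d, p; q, d] - (d - μ) • (1 : Matrix (Fin 2) (Fin 2) R)).det = 0 := by
  rw [sub_eq_add_neg d μ]
  exact det_sub_add_smul_one_eq_zero (by rwa [neg_sq])

theorem Complex.norm_one_add_ofReal_mul_I (s : ℝ) : ‖1 + s * I‖ = √(1 + s ^ 2) := by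
  simpa using norm_add_mul_I 1 s

theorem Complex.norm_one_sub_ofReal_mul_I (s : ℝ) : ‖1 - s * I‖ = √(1 + s ^ 2) := by
  simpa [sub_eq_add_neg, neg_sq] using norm_one_add_ofReal_mul_I (-s)

theorem Complex.one_lt_norm_one_add_ofReal_mul_I {s : ℝ} (hs : s ≠ 0) : 1 < ‖1 + s * I‖ := by
  rw [norm_one_add_ofReal_mul_I, Real.lt_sqrt zero_le_one]
  linarith [pow_pos (abs_pos.mpr hs) 2, sq_abs s]

theorem classical_scheme_step_eq_mulVec {c ξ ε Δt ρn un φn : ℂ} (hξ : ξ ≠ 0) (hε : ε ≠ 0)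
    (hφ : -ε ^ 2 * ξ ^ 2 * φn = ρn) :
    !![1, -I * Δt * ξ; -I * Δt * ξ * (c ^ 2 + 1 / (ε ^ 2 * ξ ^ 2)), 1] *ᵥ ![ρn, un] =
      ![ρn - Δt * I * ξ * un, un - Δt * I * ξ * c ^ 2 * ρn + Δt * I * ξ * φn] := by
  rw [mulVec_fin_two]
  simp only [of_apply, cons_val_zero, cons_val_one]
  refine vec2_eq (by ring) ?_
  subst hφ
  field_simp
  ring

theorem classical_scheme_unconditionally_unstable_general (c ξ ε Δt : ℝ)
    (hξ : ξ ≠ 0) (hε : 0 < ε) (hΔt : 0 < Δt) :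
    let M : Matrix (Fin 2) (Fin 2) ℂ :=
      !![1, -I * Δt * ξ; -I * Δt * ξ * (c ^ 2 + 1 / (ε ^ 2 * ξ ^ 2)), 1]
    let r : ℝ := Δt * ξ * Real.sqrt (c ^ 2 + 1 / (ε ^ 2 * ξ ^ 2))
    (∀ ρn un φn : ℂ, -(ε : ℂ) ^ 2 * ξ ^ 2 * φn = ρn →
      M.mulVec ![ρn, un] =
        ![ρn - Δt * I * ξ * un,
          un - Δt * I * ξ * c ^ 2 * ρn + Δt * I * ξ * φn]) ∧
    (M - ((1 : ℂ) + r * I) • (1 : Matrix (Fin 2) (Fin 2) ℂ)).det = 0 ∧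
    (M - ((1 : ℂ) - r * I) • (1 : Matrix (Fin 2) (Fin 2) ℂ)).det = 0 ∧
    ‖(1 : ℂ) + r * I‖
      = Real.sqrt (1 + Δt ^ 2 * ξ ^ 2 * c ^ 2 + Δt ^ 2 / ε ^ 2) ∧
    ‖(1 : ℂ) - r * I‖
      = Real.sqrt (1 + Δt ^ 2 * ξ ^ 2 * c ^ 2 + Δt ^ 2 / ε ^ 2) ∧
    1 < ‖(1 : ℂ) + r * I‖ ∧
    Real.sqrt (1 + Δt ^ 2 / ε ^ 2) ≤ ‖(1 : ℂ) + r * I‖ := by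
  intro M r
  have hr_sq : r ^ 2 = Δt ^ 2 * ξ ^ 2 * (c ^ 2 + 1 / (ε ^ 2 * ξ ^ 2)) := by
    simp only [r, mul_pow, Real.sq_sqrt (by positivity : (0 : ℝ) ≤ c ^ 2 + 1 / (ε ^ 2 * ξ ^ 2))]
  have one_add_r_sq : 1 + r ^ 2 = 1 + Δt ^ 2 * ξ ^ 2 * c ^ 2 + Δt ^ 2 / ε ^ 2 := by
    rw [hr_sq]
    field_simp
    ring
  have hr_I_sq : ((r : ℂ) * I) ^ 2 =
      (-I * Δt * ξ) * (-I * Δt * ξ * (c ^ 2 + 1 / (ε ^ 2 * ξ ^ 2))) := by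
    have hr_sq_ℂ := congrArg (fun x : ℝ => (x : ℂ)) hr_sq
    push_cast at hr_sq_ℂ
    linear_combination I ^ 2 * hr_sq_ℂ
  have hr : r ≠ 0 := by
    simp only [r]
    positivity
  refine ⟨fun ρn un φn hφ => classical_scheme_step_eq_mulVec (by exact_mod_cast hξ)
      (by exact_mod_cast hε.ne') hφ, det_sub_add_smul_one_eq_zero hr_I_sq,
    det_sub_sub_smul_one_eq_zero hr_I_sq, ?_, ?_, one_lt_norm_one_add_ofReal_mul_I hr, ?_⟩
  · rw [norm_one_add_ofReal_mul_I, one_add_r_sq]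
  · rw [norm_one_sub_ofReal_mul_I, one_add_r_sq]
  · rw [norm_one_add_ofReal_mul_I, one_add_r_sq]
    gcongr
    linarith [show 0 ≤ Δt ^ 2 * ξ ^ 2 * c ^ 2 by positivity]

/-- The classical explicit Fourier-mode scheme has amplification matrix M whose
eigenvalues 1 ± iΔtξ√(c² + 1/(ε²ξ²)) have modulus √(1 + Δt²ξ²c² + Δt²/ε²) > 1;
hence it is unconditionally unstable, with amplification at least √(1 + Δt²/ε²). -/
theorem classical_scheme_unconditionally_unstable (c ξ ε Δt : ℝ)
    (hc : 0 < c) (hξ : ξ ≠ 0) (hε : 0 < ε) (hΔt : 0 < Δt) :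
    let M : Matrix (Fin 2) (Fin 2) ℂ :=
      !![1, -I * Δt * ξ; -I * Δt * ξ * (c ^ 2 + 1 / (ε ^ 2 * ξ ^ 2)), 1]
    let r : ℝ := Δt * ξ * Real.sqrt (c ^ 2 + 1 / (ε ^ 2 * ξ ^ 2))
    (∀ ρn un φn : ℂ, -(ε : ℂ) ^ 2 * ξ ^ 2 * φn = ρn →
      M.mulVec ![ρn, un] =
        ![ρn - Δt * I * ξ * un,
          un - Δt * I * ξ * c ^ 2 * ρn + Δt * I * ξ * φn]) ∧
    (M - ((1 : ℂ) + r * I) • (1 : Matrix (Fin 2) (Fin 2) ℂ)).det = 0 ∧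
    (M - ((1 : ℂ) - r * I) • (1 : Matrix (Fin 2) (Fin 2) ℂ)).det = 0 ∧
    ‖(1 : ℂ) + r * I‖
      = Real.sqrt (1 + Δt ^ 2 * ξ ^ 2 * c ^ 2 + Δt ^ 2 / ε ^ 2) ∧
    ‖(1 : ℂ) - r * I‖
      = Real.sqrt (1 + Δt ^ 2 * ξ ^ 2 * c ^ 2 + Δt ^ 2 / ε ^ 2) ∧
    1 < ‖(1 : ℂ) + r * I‖ ∧
    Real.sqrt (1 + Δt ^ 2 / ε ^ 2) ≤ ‖(1 : ℂ) + r * I‖ :=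
  classical_scheme_unconditionally_unstable_general c ξ ε Δt hξ hε hΔt
end
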